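/- (Lemma, consumption decoupling in the charge-at-capacity region) For every time t ∈ {0,…,T−1}, if y_t ≥ (T−t)·v̄, then the optimal consumption d* in the Bellman equation at time t coincides with the optimal consumption of the static single-period surplus maximization (the two-threshold policy of Theorem 3 with prices (π_t⁺, π_t⁻)) applied to the adjusted renewable r̃_t := max{r_t − v̄, 0}: d*_i = l_i(π_t⁺) if r̃_t < Σ_j l_j(π_t⁺), d*_i = l_i(π_t⁻) if r̃_t > Σ_j l_j(π_t⁻), and d*_i = l_i(ν) with ν ∈ [π_t⁻, π_t⁺] chosen so that Σ_j l_j(ν) = r̃_t otherwise. -/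

import Mathlib

open MeasureTheory Set

/-- NEM X payment for net consumption `z` with buy price `pp` and sell price `pm`. -/
noncomputable def NEMPayment (pp pm z : ℝ) : ℝ := pp * max z 0 - pm * max (-z) 0

/-- The superdifferential of a function `f : ℝ → ℝ` (viewed as a concave function
on `[0, ∞)`) at a point `y`. -/
def superdiff (f : ℝ → ℝ) (y : ℝ) : Set ℝ :=
  {s | ∀ z, 0 ≤ z → f z ≤ f y + s * (z - y)}

/-- Data of the EV-charging / flexible-consumption dynamic program over horizon
`{0, …, T-1}` with `K` flexible loads, under NEM time-of-use prices. -/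
structure EVModel (K T : ℕ) (Ω : Type) [MeasurableSpace Ω] where
  /-- underlying probability measure -/
  μ : Measure Ω
  prob : IsProbabilityMeasure μ
  /-- consumption upper bounds -/
  dbar : Fin K → ℝ
  dbar_pos : ∀ i, 0 < dbar i
  /-- device utility functions -/
  U : Fin K → ℝ → ℝ
  U_strictConcave : ∀ i, StrictConcaveOn ℝ (Icc 0 (dbar i)) (U i)
  U_strictMono : ∀ i, StrictMonoOn (U i) (Icc 0 (dbar i))
  U_diff : ∀ i, ∀ x ∈ Icc 0 (dbar i), DifferentiableWithinAt ℝ (U i) (Icc 0 (dbar i)) x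
  U_contDeriv : ∀ i, ContinuousOn (fun x => derivWithin (U i) (Icc 0 (dbar i)) x) (Icc 0 (dbar i))
  U_zero : ∀ i, U i 0 = 0
  /-- renewable processes -/
  r : ℕ → Ω → ℝ
  r_meas : ∀ t, Measurable (r t)
  r_nonneg : ∀ t ω, 0 ≤ r t ω
  r_int : ∀ t, Integrable (r t) μ
  r_indep : ProbabilityTheory.iIndepFun r μ
  /-- time-of-use buy prices `π_t⁺` -/
  pip : ℕ → ℝ
  /-- time-of-use sell prices `π_t⁻` -/
  pim : ℕ → ℝ
  /-- maximal per-period EV charge -/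
  vbar : ℝ
  vbar_pos : 0 < vbar
  /-- per-unit penalty for unmet EV demand at the horizon -/
  γ : ℝ
  /-- `π_off⁻ = min_t π_t⁻` -/
  pioff : ℝ
  pioff_le : ∀ t < T, pioff ≤ pim t
  pioff_attained : ∃ t < T, pioff = pim t
  /-- assumption A1 -/
  A1 : ∀ t < T, 0 < pim t ∧ pim t ≤ pip t ∧ pip t < γ

namespace EVModel

variable {K T : ℕ} {Ω : Type} [MeasurableSpace Ω]

/-- Stage reward `g_t(x_t, v, d)`. -/
noncomputable def stage (M : EVModel K T Ω) (t : ℕ) (rt v : ℝ) (d : Fin K → ℝ) : ℝ :=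
  ∑ i, M.U i (d i) - NEMPayment (M.pip t) (M.pim t) (v + ∑ i, d i - rt)

/-- Feasible decisions `(v, d)` given remaining demand `y`. -/
def feas (M : EVModel K T Ω) (y : ℝ) : Set (ℝ × (Fin K → ℝ)) :=
  {p | p.1 ∈ Icc 0 (min M.vbar y) ∧ ∀ i, p.2 i ∈ Icc 0 (M.dbar i)}

/-- Value function indexed by `k = T - 1 - t`, the number of remaining periods after
the current one. -/
noncomputable def W (M : EVModel K T Ω) : ℕ → ℝ → ℝ → ℝ
  | 0 => fun y rt => sSup ((fun p : ℝ × (Fin K → ℝ) =>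
      M.stage (T - 1) rt p.1 p.2 - M.γ * (y - p.1)) '' M.feas y)
  | (k + 1) => fun y rt => sSup ((fun p : ℝ × (Fin K → ℝ) =>
      M.stage (T - 2 - k) rt p.1 p.2 +
        ∫ ω, M.W k (y - p.1) (M.r (T - 1 - k) ω) ∂M.μ) '' M.feas y)

/-- Value function `V_t(y, r_t)` (the price argument is determined by `t`). -/
noncomputable def V (M : EVModel K T Ω) (t : ℕ) (y rt : ℝ) : ℝ := M.W (T - 1 - t) y rt

/-- Expected value function `V̄_t(y) = E[V_t(y, r_t, π_t)]`. -/
noncomputable def Vbar (M : EVModel K T Ω) (t : ℕ) (y : ℝ) : ℝ := ∫ ω, M.V t y (M.r t ω) ∂M.μ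

/-- Objective of the Bellman equation at time `t` in state `(y, rt)`. -/
noncomputable def bellObj (M : EVModel K T Ω) (t : ℕ) (y rt : ℝ) (p : ℝ × (Fin K → ℝ)) : ℝ :=
  if t = T - 1 then M.stage t rt p.1 p.2 - M.γ * (y - p.1)
  else M.stage t rt p.1 p.2 + ∫ ω, M.V (t + 1) (y - p.1) (M.r (t + 1) ω) ∂M.μ

/-- `(v, d)` is an optimal solution of the Bellman equation at time `t`. -/
def IsBellmanOpt (M : EVModel K T Ω) (t : ℕ) (y rt : ℝ) (p : ℝ × (Fin K → ℝ)) : Prop :=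
  p ∈ M.feas y ∧ ∀ q ∈ M.feas y, M.bellObj t y rt q ≤ M.bellObj t y rt p

/-- Superdifferential `h_t` of the concave expected value function `V̄_t`. -/
noncomputable def h (M : EVModel K T Ω) (t : ℕ) (y : ℝ) : Set ℝ := superdiff (M.Vbar t) y

end EVModel

/-!
Beyond the capacity threshold `y ≥ (T - t) v̄` the remaining demand can never be met, so every
unit of charge not bought now is paid at the horizon penalty `γ`: by backward induction the
value function is `W(y) = const - γ y` there, and the Bellman objective becomes the stage reward
plus `γ v`. Since `γ > π⁺`, charging at full capacity `v̄` is strictly optimal, and what is left is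
the static surplus problem with renewable `r - v̄`, where a negative renewable is a fixed
purchase, so it may be clipped at `0`. For that problem take the price `ν ∈ [π⁻, π⁺]` at which the
clipped demands `l i ν` are billed exactly at rate `ν` (the two thresholds, or the intermediate
value theorem in between); the bound `NEMPayment ≥ ν z` splits the surplus into the independent
problems `max U i x - ν x`, whose unique maximizers are the `l i ν`.
-/

theorem ConcaveOn.isMaxOn_sub_mul_of_hasDerivWithinAt {U L : ℝ → ℝ} {a b ν x : ℝ}
    (hU : ConcaveOn ℝ (Icc a b) U)
    (hL : ∀ x ∈ Icc a b, HasDerivWithinAt U (L x) (Icc a b) x) (hx : x ∈ Icc a b)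
    (hright : x < b → L x ≤ ν) (hleft : a < x → ν ≤ L x) :
    IsMaxOn (fun z => U z - ν * z) (Icc a b) x := by
  refine isMaxOn_iff.2 fun z hz => ?_
  rcases lt_trichotomy x z with hxz | rfl | hzx
  · have hslope := hU.slope_le_of_hasDerivWithinAt hx hz hxz (hL x hx)
    rw [slope_def_field, div_le_iff₀ (sub_pos.2 hxz)] at hslope
    nlinarith [hright (hxz.trans_le hz.2)]
  · exact le_rfl
  · have hslope := hU.le_slope_of_hasDerivWithinAt hz hx hzx (hL x hx)
    rw [slope_def_field, le_div_iff₀ (sub_pos.2 hzx)] at hslope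
    nlinarith [hleft (hz.1.trans_lt hzx)]

theorem Antitone.continuous_of_range_eq_Icc {f : ℝ → ℝ} {a b : ℝ} (hf : Antitone f)
    (hrange : range f = Icc a b) : Continuous f := by
  have hmem : ∀ x, f x ∈ Icc a b := fun x => hrange ▸ mem_range_self x
  let g : ℝ → (Icc a b)ᵒᵈ := fun x => OrderDual.toDual ⟨f x, hmem x⟩
  have hg : Continuous g := by
    refine Monotone.continuous_of_surjective (fun x y hxy => hf hxy) fun z => ?_
    obtain ⟨x, hx⟩ : OrderDual.ofDual z ∈ Subtype.val ⁻¹' range f := by simp [hrange]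
    exact ⟨x, Subtype.ext hx⟩
  exact continuous_subtype_val.comp (continuous_ofDual.comp hg)

/-- `l` is the clipped inverse `π ↦ max 0 (min D (L⁻¹ π))` of a decreasing `L`, described
without inverting `L`. -/
structure IsClippedInverse (L : ℝ → ℝ) (D : ℝ) (l : ℝ → ℝ) : Prop where
  mem : ∀ π, l π ∈ Icc 0 D
  eq_right : ∀ π, π ≤ L D → l π = D
  eq_left : ∀ π, L 0 ≤ π → l π = 0
  apply_eq : ∀ π, L D < π → π < L 0 → L (l π) = π

namespace IsClippedInverse

variable {U L l : ℝ → ℝ} {D : ℝ}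

theorem isMaxOn (hl : IsClippedInverse L D l) (hU : ConcaveOn ℝ (Icc 0 D) U)
    (hL : ∀ x ∈ Icc 0 D, HasDerivWithinAt U (L x) (Icc 0 D) x) (π : ℝ) :
    IsMaxOn (fun x => U x - π * x) (Icc 0 D) (l π) := by
  have hkkt := hU.isMaxOn_sub_mul_of_hasDerivWithinAt (ν := π) hL (hl.mem π)
  by_cases hright : π ≤ L D
  · rw [hl.eq_right π hright] at hkkt ⊢
    exact hkkt (fun h => absurd h (lt_irrefl D)) fun _ => hright
  by_cases hleft : L 0 ≤ π
  · rw [hl.eq_left π hleft] at hkkt ⊢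
    exact hkkt (fun _ => hleft) fun h => absurd h (lt_irrefl 0)
  have hLl := hl.apply_eq π (not_le.1 hright) (not_le.1 hleft)
  exact hkkt (fun _ => hLl.le) fun _ => hLl.ge

theorem eq_of_isMaxOn (hl : IsClippedInverse L D l) (hU : StrictConcaveOn ℝ (Icc 0 D) U)
    (hL : ∀ x ∈ Icc 0 D, HasDerivWithinAt U (L x) (Icc 0 D) x) {π x : ℝ} (hx : x ∈ Icc 0 D)
    (hmax : IsMaxOn (fun x => U x - π * x) (Icc 0 D) x) : x = l π :=
  (hU.sub_convexOn ((LinearMap.mul ℝ ℝ π).convexOn (convex_Icc 0 D))).eq_of_isMaxOn hmax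
    (hl.isMaxOn hU.concaveOn hL π) hx (hl.mem π)

theorem antitone (hl : IsClippedInverse L D l) (hU : ConcaveOn ℝ (Icc 0 D) U)
    (hL : ∀ x ∈ Icc 0 D, HasDerivWithinAt U (L x) (Icc 0 D) x) : Antitone l := by
  intro π π' hππ'
  have h := isMaxOn_iff.1 (hl.isMaxOn hU hL π) _ (hl.mem π')
  have h' := isMaxOn_iff.1 (hl.isMaxOn hU hL π') _ (hl.mem π)
  rcases hππ'.eq_or_lt with rfl | hlt
  · exact le_rfl
  · nlinarith

theorem apply_deriv (hl : IsClippedInverse L D l) (hU : StrictConcaveOn ℝ (Icc 0 D) U)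
    (hL : ∀ x ∈ Icc 0 D, HasDerivWithinAt U (L x) (Icc 0 D) x) {x : ℝ} (hx : x ∈ Icc 0 D) :
    l (L x) = x :=
  (hl.eq_of_isMaxOn hU hL hx <|
    hU.concaveOn.isMaxOn_sub_mul_of_hasDerivWithinAt hL hx (fun _ => le_rfl) fun _ => le_rfl).symm

theorem continuous (hl : IsClippedInverse L D l) (hU : StrictConcaveOn ℝ (Icc 0 D) U)
    (hL : ∀ x ∈ Icc 0 D, HasDerivWithinAt U (L x) (Icc 0 D) x) : Continuous l :=
  (hl.antitone hU.concaveOn hL).continuous_of_range_eq_Icc <|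
    (range_subset_iff.2 hl.mem).antisymm fun x hx => ⟨L x, hl.apply_deriv hU hL hx⟩

end IsClippedInverse

section NEMPayment

variable {pp pm : ℝ}

theorem NEMPayment_of_nonneg {z : ℝ} (hz : 0 ≤ z) : NEMPayment pp pm z = pp * z := by
  simp [NEMPayment, hz]

theorem NEMPayment_of_nonpos {z : ℝ} (hz : z ≤ 0) : NEMPayment pp pm z = pm * z := by
  simp [NEMPayment, hz]

theorem NEMPayment_eq_add (z : ℝ) : NEMPayment pp pm z = (pp - pm) * max z 0 + pm * z := by
  rcases le_total z 0 with hz | hz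
  · rw [NEMPayment_of_nonpos hz, max_eq_right hz]; ring
  · rw [NEMPayment_of_nonneg hz, max_eq_left hz]; ring

theorem mul_le_NEMPayment {ν : ℝ} (hν : ν ∈ Icc pm pp) (z : ℝ) : ν * z ≤ NEMPayment pp pm z := by
  rcases le_total z 0 with hz | hz
  · rw [NEMPayment_of_nonpos hz]; nlinarith [hν.1]
  · rw [NEMPayment_of_nonneg hz]; nlinarith [hν.2]

theorem abs_NEMPayment_sub_le (hpm : 0 ≤ pm) (hpmp : pm ≤ pp) (a b : ℝ) :
    |NEMPayment pp pm a - NEMPayment pp pm b| ≤ pp * |a - b| := by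
  have hmax := abs_max_sub_max_le_abs a b 0
  calc |NEMPayment pp pm a - NEMPayment pp pm b|
      = |(pp - pm) * (max a 0 - max b 0) + pm * (a - b)| := by
        rw [NEMPayment_eq_add, NEMPayment_eq_add]; ring_nf
    _ ≤ (pp - pm) * |a - b| + pm * |a - b| := by
        refine (abs_add_le _ _).trans (add_le_add ?_ ?_) <;>
          rw [abs_mul, abs_of_nonneg (by linarith)]
        · exact mul_le_mul_of_nonneg_left hmax (by linarith)
    _ = pp * |a - b| := by ring

theorem NEMPayment_sub_eq {s : ℝ} (hs : 0 ≤ s) (R : ℝ) :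
    NEMPayment pp pm (s - R) = NEMPayment pp pm (s - max R 0) + pp * max (-R) 0 := by
  rcases le_total 0 R with hR | hR
  · simp [hR]
  · rw [max_eq_right hR, max_eq_left (neg_nonneg.2 hR), sub_zero,
      NEMPayment_of_nonneg (by linarith), NEMPayment_of_nonneg hs]
    ring

end NEMPayment

noncomputable def surplus {ι : Type*} [Fintype ι] (U : ι → ℝ → ℝ) (pp pm R : ℝ) (d : ι → ℝ) : ℝ :=
  ∑ i, U i (d i) - NEMPayment pp pm (∑ i, d i - R)

section Surplus

variable {ι : Type*} [Fintype ι] {U L l : ι → ℝ → ℝ} {D : ι → ℝ} {pp pm R ν : ℝ}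

theorem eq_of_isMaxOn_surplus (hU : ∀ i, StrictConcaveOn ℝ (Icc 0 (D i)) (U i))
    (hL : ∀ i, ∀ x ∈ Icc 0 (D i), HasDerivWithinAt (U i) (L i x) (Icc 0 (D i)) x)
    (hl : ∀ i, IsClippedInverse (L i) (D i) (l i)) {d : ι → ℝ}
    (hd : d ∈ univ.pi fun i => Icc 0 (D i))
    (hmax : IsMaxOn (surplus U pp pm R) (univ.pi fun i => Icc 0 (D i)) d)
    (hν : ν ∈ Icc pm pp)
    (hpay : NEMPayment pp pm (∑ i, l i ν - R) = ν * (∑ i, l i ν - R)) (i : ι) :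
    d i = l i ν := by
  set φ : ι → ℝ → ℝ := fun i x => U i x - ν * x
  have hφ : ∀ i, IsMaxOn (φ i) (Icc 0 (D i)) (l i ν) :=
    fun i => (hl i).isMaxOn (hU i).concaveOn (hL i) ν
  have hsum_le : ∑ i, φ i (l i ν) ≤ ∑ i, φ i (d i) := by
    have hopt := isMaxOn_iff.1 hmax (fun i => l i ν) (mem_univ_pi.2 fun i => (hl i).mem ν)
    have hlow := mul_le_NEMPayment (pp := pp) hν (∑ i, d i - R)
    simp only [surplus, hpay] at hopt
    simp only [φ, Finset.sum_sub_distrib, ← Finset.mul_sum]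
    linarith
  have hle : ∀ j ∈ Finset.univ, φ j (d j) ≤ φ j (l j ν) :=
    fun j _ => isMaxOn_iff.1 (hφ j) _ (mem_univ_pi.1 hd j)
  have hterm := (Finset.sum_eq_sum_iff_of_le hle).1 ((Finset.sum_le_sum hle).antisymm hsum_le)
  refine (hl i).eq_of_isMaxOn (hU i) (hL i) (mem_univ_pi.1 hd i) ?_
  exact isMaxOn_iff.2 fun x hx =>
    (isMaxOn_iff.1 (hφ i) x hx).trans (hterm i (Finset.mem_univ i)).ge

theorem exists_sum_clippedInverse_eq (hU : ∀ i, StrictConcaveOn ℝ (Icc 0 (D i)) (U i))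
    (hL : ∀ i, ∀ x ∈ Icc 0 (D i), HasDerivWithinAt (U i) (L i x) (Icc 0 (D i)) x)
    (hl : ∀ i, IsClippedInverse (L i) (D i) (l i)) (hpmp : pm ≤ pp)
    (hR : R ∈ Icc (∑ i, l i pp) (∑ i, l i pm)) : ∃ ν ∈ Icc pm pp, ∑ i, l i ν = R :=
  intermediate_value_Icc' hpmp
    (continuous_finsetSum _ fun i _ => (hl i).continuous (hU i) (hL i)).continuousOn hR

theorem eq_clippedInverse_of_isMaxOn_surplus (hU : ∀ i, StrictConcaveOn ℝ (Icc 0 (D i)) (U i))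
    (hL : ∀ i, ∀ x ∈ Icc 0 (D i), HasDerivWithinAt (U i) (L i x) (Icc 0 (D i)) x)
    (hl : ∀ i, IsClippedInverse (L i) (D i) (l i)) (hpmp : pm ≤ pp) {d : ι → ℝ}
    (hd : d ∈ univ.pi fun i => Icc 0 (D i))
    (hmax : IsMaxOn (surplus U pp pm R) (univ.pi fun i => Icc 0 (D i)) d) :
    (R < ∑ i, l i pp → ∀ i, d i = l i pp) ∧
      (∑ i, l i pm < R → ∀ i, d i = l i pm) ∧
      (∑ i, l i pp ≤ R → R ≤ ∑ i, l i pm →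
        ∃ ν ∈ Icc pm pp, ∑ i, l i ν = R ∧ ∀ i, d i = l i ν) := by
  refine ⟨fun hR => ?_, fun hR => ?_, fun hR₁ hR₂ => ?_⟩
  · exact eq_of_isMaxOn_surplus hU hL hl hd hmax ⟨hpmp, le_rfl⟩
      (NEMPayment_of_nonneg (sub_nonneg.2 hR.le))
  · exact eq_of_isMaxOn_surplus hU hL hl hd hmax ⟨le_rfl, hpmp⟩
      (NEMPayment_of_nonpos (sub_nonpos.2 hR.le))
  · obtain ⟨ν, hν, hsum⟩ := exists_sum_clippedInverse_eq hU hL hl hpmp ⟨hR₁, hR₂⟩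
    refine ⟨ν, hν, hsum, eq_of_isMaxOn_surplus hU hL hl hd hmax hν ?_⟩
    simp [hsum, NEMPayment]

end Surplus

theorem LipschitzWith.integrable_comp {Ω : Type*} [MeasurableSpace Ω] {μ : Measure Ω}
    [IsFiniteMeasure μ] {K : NNReal} {g : ℝ → ℝ} (hg : LipschitzWith K g) {f : Ω → ℝ}
    (hf : Integrable f μ) : Integrable (fun ω => g (f ω)) μ := by
  refine ((integrable_const |g 0|).add (hf.norm.const_mul K)).mono'
    (hg.continuous.comp_aestronglyMeasurable hf.1) (ae_of_all _ fun ω => ?_)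
  have h := hg.dist_le_mul (f ω) 0
  simp only [Real.dist_eq, sub_zero, Real.norm_eq_abs, Pi.add_apply] at h ⊢
  linarith [abs_sub_abs_le_abs_sub (g (f ω)) (g 0)]

namespace EVModel

variable {K T : ℕ} {Ω : Type} [MeasurableSpace Ω] (M : EVModel K T Ω)

noncomputable def wObj : ℕ → ℝ → ℝ → ℝ × (Fin K → ℝ) → ℝ
  | 0, y, rt, p => M.stage (T - 1) rt p.1 p.2 - M.γ * (y - p.1)
  | k + 1, y, rt, p => M.stage (T - 2 - k) rt p.1 p.2 +
      ∫ ω, M.W k (y - p.1) (M.r (T - 1 - k) ω) ∂M.μ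

theorem W_eq_sSup (k : ℕ) (y rt : ℝ) : M.W k y rt = sSup (M.wObj k y rt '' M.feas y) := by
  cases k <;> rfl

theorem bellObj_eq_wObj {t : ℕ} (ht : t < T) (y rt : ℝ) (p : ℝ × (Fin K → ℝ)) :
    M.bellObj t y rt p = M.wObj (T - 1 - t) y rt p := by
  unfold bellObj
  split_ifs with hlast
  · subst hlast
    rw [show T - 1 - (T - 1) = 0 by omega]
    rfl
  · obtain ⟨k, hk⟩ : ∃ k, T - 1 - t = k + 1 := ⟨T - 2 - t, by omega⟩
    simp only [hk, wObj, V, show T - 2 - k = t by omega, show T - 1 - k = t + 1 by omega,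
      show T - 1 - (t + 1) = k by omega]

noncomputable def chargeObj (t : ℕ) (rt : ℝ) (p : ℝ × (Fin K → ℝ)) : ℝ :=
  M.stage t rt p.1 p.2 + M.γ * p.1

noncomputable def capVal (t : ℕ) (rt : ℝ) : ℝ := sSup (M.chargeObj t rt '' M.feas M.vbar)

theorem vbar_le_of_mul_le {n : ℕ} (hn : 0 < n) {y : ℝ} (hy : (n : ℝ) * M.vbar ≤ y) :
    M.vbar ≤ y := by
  have : (1 : ℝ) ≤ n := by exact_mod_cast hn
  nlinarith [M.vbar_pos]

theorem feas_eq_feas_vbar {y : ℝ} (hy : M.vbar ≤ y) : M.feas y = M.feas M.vbar := by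
  simp only [feas, min_eq_left hy, min_self]

theorem vbar_mk_mem_feas {y : ℝ} (hy : M.vbar ≤ y) {d : Fin K → ℝ}
    (hd : ∀ i, d i ∈ Icc 0 (M.dbar i)) : (M.vbar, d) ∈ M.feas y :=
  ⟨⟨M.vbar_pos.le, le_min le_rfl hy⟩, hd⟩

theorem stage_eq_surplus (t : ℕ) (rt v : ℝ) (d : Fin K → ℝ) :
    M.stage t rt v d = surplus M.U (M.pip t) (M.pim t) (rt - v) d := by
  rw [stage, surplus, show v + ∑ i, d i - rt = ∑ i, d i - (rt - v) by ring]

theorem chargeObj_le {t : ℕ} (ht : t < T) (rt : ℝ) {p : ℝ × (Fin K → ℝ)}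
    (hp : p ∈ M.feas M.vbar) :
    M.chargeObj t rt p ≤ ∑ i, M.U i (M.dbar i) + M.pim t * rt + M.γ * M.vbar := by
  obtain ⟨hpm, hpmp, hpγ⟩ := M.A1 t ht
  have hU : ∑ i, M.U i (p.2 i) ≤ ∑ i, M.U i (M.dbar i) := Finset.sum_le_sum fun i _ =>
    (M.U_strictMono i).monotoneOn (hp.2 i) (right_mem_Icc.2 (M.dbar_pos i).le) (hp.2 i).2
  have hpay := mul_le_NEMPayment ⟨le_rfl, hpmp⟩ (p.1 + ∑ i, p.2 i - rt)
  have hd : 0 ≤ ∑ i, p.2 i := Finset.sum_nonneg fun i _ => (hp.2 i).1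
  have hv : p.1 ≤ M.vbar := hp.1.2.trans (min_le_left _ _)
  simp only [chargeObj, stage]
  nlinarith [hp.1.1]

theorem abs_chargeObj_sub_le {t : ℕ} (ht : t < T) (r₁ r₂ : ℝ) (p : ℝ × (Fin K → ℝ)) :
    |M.chargeObj t r₁ p - M.chargeObj t r₂ p| ≤ M.pip t * |r₁ - r₂| := by
  obtain ⟨hpm, hpmp, -⟩ := M.A1 t ht
  have h := abs_NEMPayment_sub_le hpm.le hpmp (p.1 + ∑ i, p.2 i - r₂) (p.1 + ∑ i, p.2 i - r₁)
  rw [show p.1 + ∑ i, p.2 i - r₂ - (p.1 + ∑ i, p.2 i - r₁) = r₁ - r₂ by ring] at h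
  simp only [chargeObj, stage]
  convert h using 2
  ring

theorem lipschitzWith_capVal {t : ℕ} (ht : t < T) :
    LipschitzWith (M.pip t).toNNReal (M.capVal t) := by
  have hne : ∀ rt, (M.chargeObj t rt '' M.feas M.vbar).Nonempty := fun rt =>
    ⟨_, mem_image_of_mem _ (M.vbar_mk_mem_feas le_rfl fun i => ⟨le_rfl, (M.dbar_pos i).le⟩)⟩
  refine LipschitzWith.of_le_add_mul' _ fun r₁ r₂ => csSup_le (hne r₁) ?_
  rintro _ ⟨p, hp, rfl⟩
  have hle : M.chargeObj t r₂ p ≤ M.capVal t r₂ :=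
    le_csSup ⟨_, forall_mem_image.2 fun q hq => M.chargeObj_le ht r₂ hq⟩ (mem_image_of_mem _ hp)
  have h := (le_abs_self _).trans (M.abs_chargeObj_sub_le ht r₁ r₂ p)
  rw [Real.dist_eq]
  linarith

theorem integrable_capVal_comp {t : ℕ} (ht : t < T) (s : ℕ) :
    Integrable (fun ω => M.capVal t (M.r s ω)) M.μ :=
  haveI := M.prob
  (M.lipschitzWith_capVal ht).integrable_comp (M.r_int s)

theorem W_eq_capVal {k t : ℕ} (ht : t < T) {y rt c : ℝ} (hy : M.vbar ≤ y)
    (hobj : ∀ p ∈ M.feas y, M.wObj k y rt p = M.chargeObj t rt p - M.γ * y + c) :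
    M.W k y rt = M.capVal t rt - M.γ * y + c := by
  rw [M.feas_eq_feas_vbar hy] at hobj
  have himage : M.wObj k y rt '' M.feas M.vbar =
      OrderIso.addRight (c - M.γ * y) '' (M.chargeObj t rt '' M.feas M.vbar) := by
    rw [image_image]
    refine image_congr fun p hp => ?_
    rw [hobj p hp, OrderIso.addRight_apply]
    ring
  have hne : (M.chargeObj t rt '' M.feas M.vbar).Nonempty :=
    ⟨_, mem_image_of_mem _ (M.vbar_mk_mem_feas le_rfl fun i => ⟨le_rfl, (M.dbar_pos i).le⟩)⟩
  rw [W_eq_sSup, M.feas_eq_feas_vbar hy, himage, ← OrderIso.map_csSup' _ hne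
    ⟨_, forall_mem_image.2 fun q hq => M.chargeObj_le ht rt hq⟩, OrderIso.addRight_apply, capVal]
  ring

theorem exists_wObj_eq_chargeObj (hT : 0 < T) (k : ℕ) :
    ∃ c : ℝ, ∀ y rt : ℝ, ((k + 1 : ℕ) : ℝ) * M.vbar ≤ y → ∀ p ∈ M.feas y,
      M.wObj k y rt p = M.chargeObj (T - 1 - k) rt p - M.γ * y + c := by
  induction k with
  | zero => exact ⟨0, fun y rt _ p _ => by simp only [wObj, chargeObj, Nat.sub_zero]; ring⟩
  | succ k ih =>
    obtain ⟨c, hc⟩ := ih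
    have htk : T - 1 - k < T := by omega
    refine ⟨∫ ω, M.capVal (T - 1 - k) (M.r (T - 1 - k) ω) ∂M.μ + c, fun y rt hy p hp => ?_⟩
    have hy' : ((k + 1 : ℕ) : ℝ) * M.vbar ≤ y - p.1 := by
      have hv : p.1 ≤ M.vbar := hp.1.2.trans (min_le_left _ _)
      push_cast at hy ⊢
      linarith
    have hW : ∀ rt', M.W k (y - p.1) rt' = M.capVal (T - 1 - k) rt' + (c - M.γ * (y - p.1)) :=
      fun rt' => by
        rw [M.W_eq_capVal htk (M.vbar_le_of_mul_le k.succ_pos hy') (hc _ rt' hy')]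
        ring
    have := M.prob
    simp only [wObj, chargeObj, hW]
    rw [integral_add (M.integrable_capVal_comp htk _) (integrable_const _), integral_const,
      probReal_univ, one_smul, show T - 2 - k = T - 1 - (k + 1) by omega]
    ring

theorem fst_eq_vbar_of_isMaxOn_chargeObj {t : ℕ} (ht : t < T) {y rt : ℝ} (hy : M.vbar ≤ y)
    {p : ℝ × (Fin K → ℝ)} (hp : p ∈ M.feas y) (hmax : IsMaxOn (M.chargeObj t rt) (M.feas y) p) :
    p.1 = M.vbar := by
  obtain ⟨hpm, hpmp, hpγ⟩ := M.A1 t ht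
  have hv : p.1 ≤ M.vbar := hp.1.2.trans (min_le_left _ _)
  by_contra hne
  have hcharge := isMaxOn_iff.1 hmax _ (M.vbar_mk_mem_feas hy hp.2)
  have hpay := (le_abs_self _).trans
    (abs_NEMPayment_sub_le hpm.le hpmp (M.vbar + ∑ i, p.2 i - rt) (p.1 + ∑ i, p.2 i - rt))
  rw [show M.vbar + ∑ i, p.2 i - rt - (p.1 + ∑ i, p.2 i - rt) = M.vbar - p.1 by ring,
    abs_of_pos (sub_pos.2 (lt_of_le_of_ne hv hne))] at hpay
  simp only [chargeObj, stage] at hcharge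
  nlinarith [sub_pos.2 (lt_of_le_of_ne hv hne)]

theorem isMaxOn_surplus_of_isMaxOn_chargeObj {t : ℕ} (ht : t < T) {y rt : ℝ} (hy : M.vbar ≤ y)
    {p : ℝ × (Fin K → ℝ)} (hp : p ∈ M.feas y) (hmax : IsMaxOn (M.chargeObj t rt) (M.feas y) p) :
    IsMaxOn (surplus M.U (M.pip t) (M.pim t) (max (rt - M.vbar) 0))
      (univ.pi fun i => Icc 0 (M.dbar i)) p.2 := by
  have hshift : ∀ d ∈ univ.pi fun i => Icc 0 (M.dbar i), M.chargeObj t rt (M.vbar, d) =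
      surplus M.U (M.pip t) (M.pim t) (max (rt - M.vbar) 0) d
        - M.pip t * max (-(rt - M.vbar)) 0 + M.γ * M.vbar := fun d hd => by
    rw [chargeObj, stage_eq_surplus, surplus, surplus,
      NEMPayment_sub_eq (Finset.sum_nonneg fun i _ => (mem_univ_pi.1 hd i).1)]
    ring
  have hpv : M.chargeObj t rt p = M.chargeObj t rt (M.vbar, p.2) := by
    rw [← M.fst_eq_vbar_of_isMaxOn_chargeObj ht hy hp hmax]
  refine isMaxOn_iff.2 fun d hd => ?_
  have h := isMaxOn_iff.1 hmax _ (M.vbar_mk_mem_feas hy (mem_univ_pi.1 hd))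
  rw [hpv, hshift d hd, hshift p.2 (mem_univ_pi.2 hp.2)] at h
  linarith

variable {M} in
theorem IsBellmanOpt.isMaxOn_chargeObj {t : ℕ} {y rt : ℝ}
    {p : ℝ × (Fin K → ℝ)} (hp : M.IsBellmanOpt t y rt p) (ht : t < T)
    (hy : ((T - t : ℕ) : ℝ) * M.vbar ≤ y) : IsMaxOn (M.chargeObj t rt) (M.feas y) p := by
  obtain ⟨c, hc⟩ := M.exists_wObj_eq_chargeObj (by omega) (T - 1 - t)
  rw [show T - 1 - t + 1 = T - t by omega, show T - 1 - (T - 1 - t) = t by omega] at hc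
  refine isMaxOn_iff.2 fun q hq => ?_
  have h := hp.2 q hq
  rw [M.bellObj_eq_wObj ht, M.bellObj_eq_wObj ht, hc y rt hy q hq, hc y rt hy p hp.1] at h
  linarith

end EVModel

theorem consumption_decoupling_general (K T : ℕ) (Ω : Type) [MeasurableSpace Ω]
    (M : EVModel K T Ω)
    -- `L i` is the marginal utility `U_i'` on `[0, d̄_i]`
    (L : Fin K → ℝ → ℝ)
    (hL : ∀ i, ∀ x ∈ Set.Icc 0 (M.dbar i),
      HasDerivWithinAt (M.U i) (L i x) (Set.Icc 0 (M.dbar i)) x)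
    -- `l i π = max {0, min {d̄_i, L_i⁻¹(π)}}`, characterized by clipping
    (l : Fin K → ℝ → ℝ)
    (hl_mem : ∀ i π, l i π ∈ Set.Icc 0 (M.dbar i))
    (hl_hi : ∀ i π, π ≤ L i (M.dbar i) → l i π = M.dbar i)
    (hl_lo : ∀ i π, L i 0 ≤ π → l i π = 0)
    (hl_mid : ∀ i π, L i (M.dbar i) < π → π < L i 0 → L i (l i π) = π)
    (t : ℕ) (ht : t < T) (rt : ℝ)
    (y : ℝ) (hy : ((T - t : ℕ) : ℝ) * M.vbar ≤ y)
    (p : ℝ × (Fin K → ℝ)) (hp : M.IsBellmanOpt t y rt p) :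
    (max (rt - M.vbar) 0 < ∑ i, l i (M.pip t) → ∀ i, p.2 i = l i (M.pip t)) ∧
      ((∑ i, l i (M.pim t)) < max (rt - M.vbar) 0 → ∀ i, p.2 i = l i (M.pim t)) ∧
      ((∑ i, l i (M.pip t)) ≤ max (rt - M.vbar) 0 →
        max (rt - M.vbar) 0 ≤ ∑ i, l i (M.pim t) →
        ∃ ν ∈ Set.Icc (M.pim t) (M.pip t),
          (∑ i, l i ν) = max (rt - M.vbar) 0 ∧ ∀ i, p.2 i = l i ν) := by
  obtain ⟨-, hpmp, -⟩ := M.A1 t ht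
  have hvy : M.vbar ≤ y := M.vbar_le_of_mul_le (by omega) hy
  have hmax := M.isMaxOn_surplus_of_isMaxOn_chargeObj ht hvy hp.1 (hp.isMaxOn_chargeObj ht hy)
  exact eq_clippedInverse_of_isMaxOn_surplus M.U_strictConcave hL
    (fun i => ⟨hl_mem i, hl_hi i, hl_lo i, hl_mid i⟩) hpmp (mem_univ_pi.2 hp.1.2) hmax

/-- **Lemma (consumption decoupling in the charge-at-capacity region).**
For every `t ∈ {0, …, T-1}`, if `y ≥ (T - t) v̄`, then the optimal consumption `d*`
of the Bellman equation at time `t` follows the two-threshold policy of Theorem 3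
with prices `(π_t⁺, π_t⁻)` applied to the adjusted renewable `r̃ = max {r_t - v̄, 0}`. -/
theorem consumption_decoupling (K T : ℕ) (Ω : Type) [MeasurableSpace Ω]
    (M : EVModel K T Ω)
    -- `L i` is the marginal utility `U_i'` on `[0, d̄_i]`
    (L : Fin K → ℝ → ℝ)
    (hL : ∀ i, ∀ x ∈ Set.Icc 0 (M.dbar i),
      HasDerivWithinAt (M.U i) (L i x) (Set.Icc 0 (M.dbar i)) x)
    (hLcont : ∀ i, ContinuousOn (L i) (Set.Icc 0 (M.dbar i)))
    -- `l i π = max {0, min {d̄_i, L_i⁻¹(π)}}`, characterized by clipping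
    (l : Fin K → ℝ → ℝ)
    (hl_mem : ∀ i π, l i π ∈ Set.Icc 0 (M.dbar i))
    (hl_hi : ∀ i π, π ≤ L i (M.dbar i) → l i π = M.dbar i)
    (hl_lo : ∀ i π, L i 0 ≤ π → l i π = 0)
    (hl_mid : ∀ i π, L i (M.dbar i) < π → π < L i 0 → L i (l i π) = π)
    (t : ℕ) (ht : t < T) (rt : ℝ) (hrt : 0 ≤ rt)
    (y : ℝ) (hy : ((T - t : ℕ) : ℝ) * M.vbar ≤ y)
    (p : ℝ × (Fin K → ℝ)) (hp : M.IsBellmanOpt t y rt p) :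
    (max (rt - M.vbar) 0 < ∑ i, l i (M.pip t) → ∀ i, p.2 i = l i (M.pip t)) ∧
      ((∑ i, l i (M.pim t)) < max (rt - M.vbar) 0 → ∀ i, p.2 i = l i (M.pim t)) ∧
      ((∑ i, l i (M.pip t)) ≤ max (rt - M.vbar) 0 →
        max (rt - M.vbar) 0 ≤ ∑ i, l i (M.pim t) →
        ∃ ν ∈ Set.Icc (M.pim t) (M.pip t),
          (∑ i, l i ν) = max (rt - M.vbar) 0 ∧ ∀ i, p.2 i = l i ν) :=
  consumption_decoupling_general K T Ω M L hL l hl_mem hl_hi hl_lo hl_mid t ht rt y hy p hp
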